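/- Let D be a totally ordered integral domain and S a Specker D-algebra. Define P ⊆ S to be the set of elements having an orthogonal decomposition with all coefficients nonnegative. Then P ∩ (−P) = {0}, and P is closed under addition, multiplication, and multiplication by nonnegative scalars from D. -/

import Mathlib

/-!
Completing an orthogonal family `(eᵢ)` by `1 - ∑ eᵢ` turns it into a partition of unity, and two
partitions of unity `(eᵢ)`, `(fⱼ)` have the common refinement `(eᵢ fⱼ)`. Hence any two elements of `P`
have nonnegative decompositions over one and the same orthogonal family, where sums and products
are computed coefficientwise. If `s = ∑ aᵢ eᵢ` and `-s = ∑ bᵢ eᵢ` are such, multiplying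
`∑ (aᵢ + bᵢ) eᵢ = 0` by `eₖ` gives `(aₖ + bₖ) eₖ = 0`, and torsion-freeness with `aₖ, bₖ ≥ 0` forces
`aₖ eₖ = 0`.
-/

open Finset

/-- A `D`-algebra `S` is torsion-free as a `D`-module. -/
def SpTorsionFree (D S : Type*) [CommRing D] [CommRing S] [Algebra D S] : Prop :=
  ∀ (a : D) (s : S), a • s = 0 → a = 0 ∨ s = 0

/-- `S` is generated as a `D`-algebra by its idempotents. -/
def SpIdemGenerated (D S : Type*) [CommRing D] [CommRing S] [Algebra D S] : Prop :=
  Algebra.adjoin D {e : S | IsIdempotentElem e} = ⊤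

/-- A Specker `D`-algebra: commutative unital, torsion-free, idempotent-generated. -/
def IsSpecker (D S : Type*) [CommRing D] [CommRing S] [Algebra D S] : Prop :=
  SpTorsionFree D S ∧ SpIdemGenerated D S

/-- The idempotents of `S`. -/
abbrev IdemOf (S : Type*) [Monoid S] := {e : S // IsIdempotentElem e}

/-- A full orthogonal decomposition of `s` with pairwise distinct coefficients and
nonzero pairwise orthogonal idempotents summing (= joining) to `1`. -/
def FullOrthDecomp (D S : Type*) [CommRing D] [CommRing S] [Algebra D S] {n : ℕ}
    (a : Fin n → D) (e : Fin n → S) (s : S) : Prop :=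
  Function.Injective a ∧ (∀ i, IsIdempotentElem (e i)) ∧ (∀ i, e i ≠ 0) ∧
    (∀ i j, i ≠ j → e i * e j = 0) ∧ (∑ i, e i = 1) ∧ s = ∑ i, a i • e i

/-- `s` has an orthogonal decomposition with nonnegative coefficients. -/
def OrthNonnegDecomp (D S : Type*) [CommRing D] [LinearOrder D] [IsStrictOrderedRing D] [CommRing S] [Algebra D S]
    (s : S) : Prop :=
  ∃ (n : ℕ) (a : Fin n → D) (e : Fin n → S),
    (∀ i, 0 ≤ a i) ∧ (∀ i, IsIdempotentElem (e i)) ∧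
    (∀ i j, i ≠ j → e i * e j = 0) ∧ s = ∑ i, a i • e i

/-- The canonical f-algebra order relation on a Specker algebra. -/
def specLE (D S : Type*) [CommRing D] [LinearOrder D] [IsStrictOrderedRing D] [CommRing S] [Algebra D S]
    (s t : S) : Prop :=
  OrthNonnegDecomp D S (t - s)

section Rel
variable {S : Type*}
def relUB (le : S → S → Prop) (A : Set S) (u : S) : Prop := ∀ x ∈ A, le x u
def relLB (le : S → S → Prop) (A : Set S) (u : S) : Prop := ∀ x ∈ A, le u x
def relIsLUB (le : S → S → Prop) (A : Set S) (u : S) : Prop :=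
  relUB le A u ∧ ∀ v, relUB le A v → le u v
def relIsGLB (le : S → S → Prop) (A : Set S) (u : S) : Prop :=
  relLB le A u ∧ ∀ v, relLB le A v → le v u
end Rel

/-- A function `D → B` belonging to Foster's boolean power `D[B]*`:
finitely valued, pairwise disjoint values, values join to `⊤`. -/
def IsBPFn (D B : Type*) [CommRing D] [BooleanAlgebra B] (f : D → B) : Prop :=
  (Set.range f).Finite ∧ (∀ a b : D, a ≠ b → f a ⊓ f b = ⊥) ∧ IsLUB (Set.range f) ⊤

/-- Foster's boolean power `D[B]*` as a set of functions. -/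
def DBStar (D B : Type*) [CommRing D] [BooleanAlgebra B] : Type _ :=
  {f : D → B // IsBPFn D B f}

/-- The boolean-power `D`-algebra operations on `D[B]*`, characterized via least upper bounds. -/
def FosterOps (D B : Type*) [CommRing D] [BooleanAlgebra B]
    [CommRing (DBStar D B)] [Algebra D (DBStar D B)] : Prop :=
  (∀ f g : DBStar D B, ∀ a : D,
      IsLUB {x : B | ∃ b c : D, b + c = a ∧ x = f.1 b ⊓ g.1 c} ((f + g).1 a)) ∧
  (∀ f g : DBStar D B, ∀ a : D,
      IsLUB {x : B | ∃ b c : D, b * c = a ∧ x = f.1 b ⊓ g.1 c} ((f * g).1 a)) ∧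
  (∀ (b : D) (f : DBStar D B) (a : D),
      IsLUB {x : B | ∃ c : D, b * c = a ∧ x = f.1 c} ((b • f).1 a))

/-- Decreasing step functions `D → B` determined by a chain `1 = e₀ > e₁ > ⋯ > eₙ > 0`
and thresholds `a₀ < a₁ < ⋯ < aₙ`. -/
def IsFlatFn (D B : Type*) [CommRing D] [LinearOrder D] [IsStrictOrderedRing D] [BooleanAlgebra B] (f : D → B) : Prop :=
  ∃ (n : ℕ) (a : Fin (n + 1) → D) (e : Fin (n + 1) → B),
    StrictMono a ∧ StrictAnti e ∧ e 0 = ⊤ ∧ ⊥ < e (Fin.last n) ∧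
    (∀ x : D, x ≤ a 0 → f x = ⊤) ∧
    (∀ (i : Fin n) (x : D), a i.castSucc < x → x ≤ a i.succ → f x = e i.succ) ∧
    (∀ x : D, a (Fin.last n) < x → f x = ⊥)

/-- The de Vries power `D[B]♭` as a set of decreasing step functions. -/
def DBFlat (D B : Type*) [CommRing D] [LinearOrder D] [IsStrictOrderedRing D] [BooleanAlgebra B] : Type _ :=
  {f : D → B // IsFlatFn D B f}

/-- A proximity on a torsion-free f-algebra over `D` (axioms (P1)–(P10)). -/
def IsProximity (D S : Type*) [CommRing D] [LinearOrder D] [IsStrictOrderedRing D] [CommRing S] [Algebra D S]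
    [Lattice S] (r : S → S → Prop) : Prop :=
  (r 0 0 ∧ r 1 1) ∧
  (∀ s t : S, r s t → s ≤ t) ∧
  (∀ s t u v : S, s ≤ t → r t u → u ≤ v → r s v) ∧
  (∀ s t u : S, r s t → r s u → r s (t ⊓ u)) ∧
  (∀ s t : S, r s t → r (-t) (-s)) ∧
  (∀ s t u v : S, r s t → r u v → r (s + u) (t + v)) ∧
  (∀ (s t : S) (a : D), 0 < a → r s t → r (a • s) (a • t)) ∧
  (∀ s t : S, (∃ a : D, 0 < a ∧ r (a • s) (a • t)) → r s t) ∧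
  (∀ s t u v : S, 0 ≤ s → 0 ≤ t → 0 ≤ u → 0 ≤ v → r s t → r u v → r (s * u) (t * v)) ∧
  (∀ s t : S, r s t → ∃ u, r s u ∧ r u t) ∧
  (∀ s : S, 0 < s → ∃ t, 0 < t ∧ r t s)

/-- A de Vries proximity on a boolean algebra. -/
def IsDeVriesProx (B : Type*) [BooleanAlgebra B] (p : B → B → Prop) : Prop :=
  (p ⊥ ⊥ ∧ p ⊤ ⊤) ∧
  (∀ a b : B, p a b → a ≤ b) ∧
  (∀ a b c d : B, a ≤ b → p b c → c ≤ d → p a d) ∧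
  (∀ a b c : B, p a b → p a c → p a (b ⊓ c)) ∧
  (∀ a b : B, p a b → p bᶜ aᶜ) ∧
  (∀ a b : B, p a b → ∃ c, p a c ∧ p c b) ∧
  (∀ a : B, a ≠ ⊥ → ∃ b, b ≠ ⊥ ∧ p b a)

/-- A Baer ring: the annihilator of every ideal is generated by an idempotent. -/
def IsBaer (S : Type*) [CommRing S] : Prop :=
  ∀ I : Ideal S, ∃ e : S, IsIdempotentElem e ∧
    ∀ r : S, (∀ s ∈ I, r * s = 0) ↔ ∃ x : S, r = x * e

/-- Proximity morphisms between proximity (Baer-)Specker algebras (axioms (M1)–(M7)). -/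
def IsProxMorphism (D S T : Type*) [CommRing D] [LinearOrder D] [IsStrictOrderedRing D]
    [CommRing S] [Algebra D S] [CommRing T] [Algebra D T] [Lattice S] [Lattice T]
    (rS : S → S → Prop) (rT : T → T → Prop) (α : S → T) : Prop :=
  α 0 = 0 ∧
  (∀ s t : S, α (s ⊓ t) = α s ⊓ α t) ∧
  (∀ s t : S, rS s t → rT (-(α (-s))) (α t)) ∧
  (∀ t : S, IsLUB {x : T | ∃ s : S, rS s t ∧ x = α s} (α t)) ∧
  (∀ (s : S) (a : D), α (s + algebraMap D S a) = α s + algebraMap D T a) ∧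
  (∀ (s : S) (a : D), 0 ≤ a → α (a • s) = a • α s) ∧
  (∀ (s : S) (a : D), α (s ⊔ algebraMap D S a) = α s ⊔ algebraMap D T a)

section OrthogonalIdempotents

variable {D S : Type*} [CommSemiring D] [CommSemiring S] [Algebra D S]

lemma OrthogonalIdempotents.sum_smul_mul {ι : Type*} [Fintype ι] {e : ι → S}
    (he : OrthogonalIdempotents e) (a : ι → D) (k : ι) :
    (∑ i, a i • e i) * e k = a k • e k := by
  classical
  simp [Finset.sum_mul, he.mul_eq]

lemma OrthogonalIdempotents.sum_smul_mul_sum_smul {ι : Type*} [Fintype ι] {e : ι → S}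
    (he : OrthogonalIdempotents e) (a b : ι → D) :
    (∑ i, a i • e i) * (∑ i, b i • e i) = ∑ i, (a i * b i) • e i := by
  rw [Finset.mul_sum]
  simp only [mul_smul_comm, he.sum_smul_mul, smul_smul, mul_comm (b _)]

lemma OrthogonalIdempotents.mul_prod {ι κ : Type*} {e : ι → S} {f : κ → S}
    (he : OrthogonalIdempotents e) (hf : OrthogonalIdempotents f) :
    OrthogonalIdempotents fun p : ι × κ => e p.1 * f p.2 where
  idem p := (he.idem p.1).mul (hf.idem p.2)
  ortho p q hpq := by
    change e p.1 * f p.2 * (e q.1 * f q.2) = 0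
    rw [mul_mul_mul_comm]
    by_cases h : p.1 = q.1
    · rw [hf.ortho fun h' => hpq (Prod.ext h h'), mul_zero]
    · rw [he.ortho h, zero_mul]

lemma sum_smul_eq_sum_prod_smul_mul_left {ι κ : Type*} [Fintype ι] [Fintype κ]
    (a : ι → D) (e : ι → S) {f : κ → S} (hf : ∑ j, f j = 1) :
    ∑ i, a i • e i = ∑ p : ι × κ, a p.1 • (e p.1 * f p.2) := by
  simp [Fintype.sum_prod_type, ← Finset.smul_sum, ← Finset.mul_sum, hf]

lemma sum_smul_eq_sum_prod_smul_mul_right {ι κ : Type*} [Fintype ι] [Fintype κ]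
    {e : ι → S} (he : ∑ i, e i = 1) (b : κ → D) (f : κ → S) :
    ∑ j, b j • f j = ∑ p : ι × κ, b p.2 • (e p.1 * f p.2) := by
  simp [Fintype.sum_prod_type_right, ← Finset.smul_sum, ← Finset.sum_mul, he]

end OrthogonalIdempotents

section OrthNonnegDecomp

variable {D S : Type*} [CommRing D] [LinearOrder D] [IsStrictOrderedRing D] [CommRing S]
  [Algebra D S]

lemma orthNonnegDecomp_iff {s : S} :
    OrthNonnegDecomp D S s ↔ ∃ (ι : Type) (_ : Fintype ι) (a : ι → D) (e : ι → S),
      (∀ i, 0 ≤ a i) ∧ OrthogonalIdempotents e ∧ s = ∑ i, a i • e i := by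
  constructor
  · rintro ⟨n, a, e, ha, he, horth, rfl⟩
    exact ⟨Fin n, inferInstance, a, e, ha, ⟨he, fun i j h => horth i j h⟩, rfl⟩
  · rintro ⟨ι, _, a, e, ha, he, rfl⟩
    let σ := (Fintype.equivFin ι).symm
    refine ⟨Fintype.card ι, a ∘ σ, e ∘ σ, fun i => ha _, fun i => he.idem _,
      fun i j h => he.ortho (σ.injective.ne h), ?_⟩
    exact (σ.sum_comp fun i => a i • e i).symm

lemma OrthNonnegDecomp.exists_complete {s : S} (hs : OrthNonnegDecomp D S s) :
    ∃ (ι : Type) (_ : Fintype ι) (a : ι → D) (e : ι → S),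
      (∀ i, 0 ≤ a i) ∧ CompleteOrthogonalIdempotents e ∧ s = ∑ i, a i • e i := by
  obtain ⟨ι, _, a, e, ha, he, rfl⟩ := orthNonnegDecomp_iff.mp hs
  refine ⟨Option ι, inferInstance, (Option.elim · 0 a), (Option.elim · (1 - ∑ i, e i) e),
    fun i => ?_, .option he, by simp [Fintype.sum_option]⟩
  cases i <;> simp [ha]

lemma OrthNonnegDecomp.exists_common_refinement {s t : S} (hs : OrthNonnegDecomp D S s)
    (ht : OrthNonnegDecomp D S t) :
    ∃ (ι : Type) (_ : Fintype ι) (a b : ι → D) (e : ι → S), (∀ i, 0 ≤ a i) ∧ (∀ i, 0 ≤ b i) ∧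
      OrthogonalIdempotents e ∧ s = ∑ i, a i • e i ∧ t = ∑ i, b i • e i := by
  obtain ⟨ι, _, a, e, ha, he, rfl⟩ := hs.exists_complete
  obtain ⟨κ, _, b, f, hb, hf, rfl⟩ := ht.exists_complete
  exact ⟨ι × κ, inferInstance, fun p => a p.1, fun p => b p.2, fun p => e p.1 * f p.2,
    fun p => ha p.1, fun p => hb p.2, he.mul_prod hf.toOrthogonalIdempotents,
    sum_smul_eq_sum_prod_smul_mul_left a e hf.complete,
    sum_smul_eq_sum_prod_smul_mul_right he.complete b f⟩

lemma OrthNonnegDecomp.of_orthogonalIdempotents {ι : Type} [Fintype ι] {a : ι → D} {e : ι → S}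
    (ha : ∀ i, 0 ≤ a i) (he : OrthogonalIdempotents e) :
    OrthNonnegDecomp D S (∑ i, a i • e i) :=
  orthNonnegDecomp_iff.mpr ⟨ι, inferInstance, a, e, ha, he, rfl⟩

lemma OrthNonnegDecomp.zero : OrthNonnegDecomp D S 0 :=
  ⟨0, Fin.elim0, Fin.elim0, Fin.rec0, Fin.rec0, Fin.rec0, by simp⟩

lemma OrthNonnegDecomp.add {s t : S} (hs : OrthNonnegDecomp D S s)
    (ht : OrthNonnegDecomp D S t) : OrthNonnegDecomp D S (s + t) := by
  obtain ⟨ι, _, a, b, e, ha, hb, he, rfl, rfl⟩ := hs.exists_common_refinement ht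
  rw [← Finset.sum_add_distrib]
  simp only [← add_smul]
  exact .of_orthogonalIdempotents (fun i => add_nonneg (ha i) (hb i)) he

lemma OrthNonnegDecomp.mul {s t : S} (hs : OrthNonnegDecomp D S s)
    (ht : OrthNonnegDecomp D S t) : OrthNonnegDecomp D S (s * t) := by
  obtain ⟨ι, _, a, b, e, ha, hb, he, rfl, rfl⟩ := hs.exists_common_refinement ht
  rw [he.sum_smul_mul_sum_smul]
  exact .of_orthogonalIdempotents (fun i => mul_nonneg (ha i) (hb i)) he

lemma OrthNonnegDecomp.smul {s : S} (hs : OrthNonnegDecomp D S s) {c : D} (hc : 0 ≤ c) :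
    OrthNonnegDecomp D S (c • s) := by
  obtain ⟨ι, _, a, e, ha, he, rfl⟩ := orthNonnegDecomp_iff.mp hs
  rw [Finset.smul_sum]
  simp only [smul_smul]
  exact .of_orthogonalIdempotents (fun i => mul_nonneg hc (ha i)) he

lemma OrthNonnegDecomp.eq_zero_of_neg (htf : SpTorsionFree D S) {s : S}
    (hs : OrthNonnegDecomp D S s) (hns : OrthNonnegDecomp D S (-s)) : s = 0 := by
  obtain ⟨ι, _, a, b, e, ha, hb, he, hsa, hsb⟩ := hs.exists_common_refinement hns
  have hsum : ∑ i, (a i + b i) • e i = 0 := by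
    simp only [add_smul, Finset.sum_add_distrib, ← hsa, ← hsb, add_neg_cancel]
  have hterm (k : ι) : a k • e k = 0 := by
    have hk : (a k + b k) • e k = 0 := by
      rw [← he.sum_smul_mul (fun i => a i + b i), hsum, zero_mul]
    rcases htf _ _ hk with hab | hek
    · rw [le_antisymm (by linarith [hb k]) (ha k), zero_smul]
    · rw [hek, smul_zero]
  rw [hsa]
  exact Finset.sum_eq_zero fun k _ => hterm k

end OrthNonnegDecomp

/-- the positive cone `P` of elements with nonnegative orthogonal
decompositions satisfies `P ∩ (−P) = {0}` and is closed under `+`, `*`, and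
nonnegative scalar multiplication. -/
theorem statement4 (D S : Type*) [CommRing D] [LinearOrder D] [IsStrictOrderedRing D] [CommRing S] [Algebra D S]
    (hS : IsSpecker D S) :
    ({s : S | OrthNonnegDecomp D S s} ∩ {s : S | OrthNonnegDecomp D S (-s)} = {0}) ∧
    (∀ s t : S, OrthNonnegDecomp D S s → OrthNonnegDecomp D S t →
      OrthNonnegDecomp D S (s + t)) ∧
    (∀ s t : S, OrthNonnegDecomp D S s → OrthNonnegDecomp D S t →
      OrthNonnegDecomp D S (s * t)) ∧
    (∀ (a : D) (s : S), 0 ≤ a → OrthNonnegDecomp D S s → OrthNonnegDecomp D S (a • s)) := by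
  refine ⟨Set.eq_singleton_iff_unique_mem.mpr ⟨?_, ?_⟩, fun _ _ => .add, fun _ _ => .mul,
    fun _ _ hc hs => hs.smul hc⟩
  · exact ⟨.zero, by simpa using OrthNonnegDecomp.zero⟩
  · exact fun s ⟨hs, hns⟩ => hs.eq_zero_of_neg hS.1 hns
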